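/- Assume m is even. Then the lowest eigenvalue of the operator S on Λ(V) is −m, and the corresponding eigenspace is one-dimensional, spanned by 1 ∈ Λ^0(V). Precisely: S(1) = −m·1; for every real number λ and every nonzero x ∈ Λ(V) with S(x) = λ·x one has λ ≥ −m; and the eigenspace {x ∈ Λ(V) : S(x) = −m·x} equals the one-dimensional subspace ℝ·1. (Proposition 5.12 of the paper.) -/

import Mathlib

noncomputable section

open ExteriorAlgebra RealInnerProductSpace

/-- `V m` is the Euclidean space `ℝ^m`. -/
abbrev Vm (m : ℕ) := EuclideanSpace ℝ (Fin m)

/-- `Λ(V)`, the exterior algebra of `ℝ^m` over `ℝ`. -/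
abbrev ExtAlg (m : ℕ) := ExteriorAlgebra ℝ (Vm m)

/-- the standard orthonormal basis vectors `e_i` of `ℝ^m`. -/
def stdB (m : ℕ) (i : Fin m) : Vm m := EuclideanSpace.single i (1 : ℝ)

/-- left exterior multiplication `e ∧ ·` on `Λ(V)`. -/
def wedgeL {m : ℕ} (e : Vm m) : Module.End ℝ (ExtAlg m) :=
  LinearMap.mulLeft ℝ (ExteriorAlgebra.ι ℝ e)

/-- interior multiplication (contraction) `ι_e` on `Λ(V)`, i.e. the odd derivation
contracting with the linear functional `⟪e, ·⟫`. -/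
def interL {m : ℕ} (e : Vm m) : Module.End ℝ (ExtAlg m) :=
  CliffordAlgebra.contractLeft (Q := (0 : QuadraticForm ℝ (Vm m))) (innerSL ℝ e).toLinearMap

/-- `c(e) = e∧ − ι_e`. -/
def cC {m : ℕ} (e : Vm m) : Module.End ℝ (ExtAlg m) := wedgeL e - interL e

/-- `ĉ(e) = e∧ + ι_e`. -/
def cH {m : ℕ} (e : Vm m) : Module.End ℝ (ExtAlg m) := wedgeL e + interL e

/-- the parity (grade) involution `σ`, acting as `(−1)^p` on `Λ^p(V)`. -/
def σP (m : ℕ) : Module.End ℝ (ExtAlg m) :=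
  (CliffordAlgebra.involute (Q := (0 : QuadraticForm ℝ (Vm m)))).toLinearMap

/-- `c̃(e) = ĉ(e) ∘ σ`. -/
def cT {m : ℕ} (e : Vm m) : Module.End ℝ (ExtAlg m) := cH e ∘ₗ σP m

/-- `S = Σᵢ c(eᵢ) ∘ c̃(eᵢ)`. -/
def Sop (m : ℕ) : Module.End ℝ (ExtAlg m) := ∑ i : Fin m, cC (stdB m i) ∘ₗ cT (stdB m i)

/-- `τ = c(e_1)∘⋯∘c(e_m)`. -/
def τP (m : ℕ) : Module.End ℝ (ExtAlg m) := (List.ofFn fun i : Fin m => cC (stdB m i)).prod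

/-- `τ^* = σ ∘ τ`. -/
def τS (m : ℕ) : Module.End ℝ (ExtAlg m) := σP m ∘ₗ τP m

/-!
Contracting with an orthonormal basis and wedging back multiplies `Λ^p(V)` by `p`, and
`c(e) ĉ(e) = 2 e∧ι_e − |e|²`. Hence `S = (2N − m) σ` with `N` the number operator, so `S` acts on
`Λ^p(V)` by `(−1)^p (2p − m)`. For `0 ≤ p ≤ m` this is at least `−m`, with equality only for
`p = 0` or for `p = m` odd, which evenness of `m` rules out. An eigenvector of `S` has its nonzero
homogeneous components only in degrees whose eigenvalue is its own.
-/

section Decomposition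

open DirectSum

variable {ι R M : Type*} [DecidableEq ι]

section Semiring

variable [Semiring R] [AddCommMonoid M] [Module R M] (𝒜 : ι → Submodule R M) [Decomposition 𝒜]

theorem decompose_apply_of_forall_mem_eq_smul {T : M →ₗ[R] M} {c : ι → R}
    (hT : ∀ i, ∀ y ∈ 𝒜 i, T y = c i • y) (x : M) (i : ι) :
    (decompose 𝒜 (T x) i : M) = c i • (decompose 𝒜 x i : M) := by
  induction x using Decomposition.inductionOn 𝒜 with
  | zero => simp
  | @homogeneous j y =>
    rw [hT j y y.2]
    by_cases hji : j = i
    · subst hji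
      rw [decompose_of_mem_same 𝒜 (Submodule.smul_mem _ _ y.2), decompose_of_mem_same 𝒜 y.2]
    · rw [decompose_of_mem_ne 𝒜 (Submodule.smul_mem _ _ y.2) hji,
        decompose_of_mem_ne 𝒜 y.2 hji, smul_zero]
  | add x y hx hy =>
    simp only [map_add, decompose_add, DirectSum.add_apply, Submodule.coe_add, hx, hy, smul_add]

theorem exists_decompose_ne_zero {x : M} (hx : x ≠ 0) : ∃ i, (decompose 𝒜 x i : M) ≠ 0 := by
  by_contra! h
  apply hx
  rw [← (decompose 𝒜).symm_apply_apply x]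
  convert decompose_symm_zero (ℳ := 𝒜)
  ext i
  simp [h i]

theorem mem_of_forall_ne_decompose_eq_zero {x : M} {i : ι}
    (h : ∀ j ≠ i, (decompose 𝒜 x j : M) = 0) : x ∈ 𝒜 i := by
  have hx : decompose 𝒜 x = of _ i (decompose 𝒜 x i) := by
    ext j
    by_cases hji : j = i
    · subst hji; simp
    · rw [h j hji, of_eq_of_ne i j _ hji, ZeroMemClass.coe_zero]
  rw [← (decompose 𝒜).symm_apply_apply x, hx, decompose_symm_of]
  exact SetLike.coe_mem _

end Semiring

variable [Ring R] [IsDomain R] [AddCommGroup M] [Module R M] [Module.IsTorsionFree R M]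
  (𝒜 : ι → Submodule R M) [Decomposition 𝒜]

theorem eq_of_apply_eq_smul_of_decompose_ne_zero {T : M →ₗ[R] M} {c : ι → R}
    (hT : ∀ i, ∀ y ∈ 𝒜 i, T y = c i • y) {μ : R} {x : M} (hx : T x = μ • x) {i : ι}
    (hi : (decompose 𝒜 x i : M) ≠ 0) : c i = μ := by
  have h := decompose_apply_of_forall_mem_eq_smul 𝒜 hT x i
  rw [hx, decompose_smul, DirectSum.smul_apply, Submodule.coe_smul] at h
  exact smul_left_injective R hi h.symm

end Decomposition

section ExteriorAlgebra

variable {R M : Type*} [CommRing R] [AddCommGroup M] [Module R M]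

theorem involute_of_mem_exteriorPower {p : ℕ} {x : ExteriorAlgebra R M} (hx : x ∈ ⋀[R]^p M) :
    CliffordAlgebra.involute (Q := (0 : QuadraticForm R M)) x = (-1 : R) ^ p • x := by
  induction hx using Submodule.pow_induction_on_left' with
  | algebraMap r => simp
  | add x y i _ _ hx hy => rw [map_add, hx, hy, smul_add]
  | mem_mul v hv n x _ ih =>
    obtain ⟨w, rfl⟩ := hv
    rw [map_mul, ih, CliffordAlgebra.involute_ι, mul_smul_comm, neg_mul, smul_neg, ← neg_smul,
      pow_succ, mul_neg_one]

/-- `∑ᵢ bᵢ ∧ ι_{fᵢ}` is a derivation which is the identity on `M`, so it counts degree. -/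
theorem sum_ι_mul_contractLeft_of_mem_exteriorPower {I : Type*} [Fintype I] (b : I → M)
    (f : I → Module.Dual R M) (hbf : ∀ v, ∑ i, f i v • b i = v) {p : ℕ}
    {x : ExteriorAlgebra R M} (hx : x ∈ ⋀[R]^p M) :
    ∑ i, ι R (b i) * CliffordAlgebra.contractLeft (Q := 0) (f i) x = (p : R) • x := by
  induction hx using Submodule.pow_induction_on_left' with
  | algebraMap r => simp [CliffordAlgebra.contractLeft_algebraMap]
  | add x y i _ _ hx hy => simp only [map_add, mul_add, Finset.sum_add_distrib, hx, hy, smul_add]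
  | mem_mul v hv n x _ ih =>
    obtain ⟨w, rfl⟩ := hv
    have hterm : ∀ i, ι R (b i) * CliffordAlgebra.contractLeft (Q := 0) (f i) (ι R w * x) =
        ι R (f i w • b i) * x + ι R w * (ι R (b i) * CliffordAlgebra.contractLeft (f i) x) := by
      intro i
      have hanti : ι R (b i) * ι R w = -(ι R w * ι R (b i)) :=
        eq_neg_of_add_eq_zero_left (ι_add_mul_swap (b i) w)
      rw [CliffordAlgebra.contractLeft_ι_mul, mul_sub, mul_smul_comm, map_smul, smul_mul_assoc,
        ← mul_assoc, hanti, neg_mul, mul_assoc, sub_neg_eq_add]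
    rw [Finset.sum_congr rfl fun i _ => hterm i, Finset.sum_add_distrib, ← Finset.sum_mul,
      ← map_sum, hbf, ← Finset.mul_sum, ih, mul_smul_comm, Nat.cast_succ, add_smul, one_smul,
      add_comm]

end ExteriorAlgebra

theorem le_finrank_of_mem_exteriorPower {K V : Type*} [Field K] [AddCommGroup V] [Module K V]
    [FiniteDimensional K V] {p : ℕ} {x : ExteriorAlgebra K V} (hx : x ∈ ⋀[K]^p V) (hx0 : x ≠ 0) :
    p ≤ Module.finrank K V := by
  by_contra! hp
  have hbot : ⋀[K]^p V = ⊥ := by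
    rw [← Submodule.finrank_eq_zero, exteriorPower.finrank_eq, Nat.choose_eq_zero_of_lt hp]
  exact hx0 (by simpa [hbot] using hx)

def numberOp (m : ℕ) : Module.End ℝ (ExtAlg m) :=
  ∑ i : Fin m, wedgeL (stdB m i) ∘ₗ interL (stdB m i)

def sopEigenvalue (m p : ℕ) : ℝ := (-1) ^ p * (2 * p - m)

section Sop

variable {m : ℕ}

theorem numberOp_apply_of_mem {p : ℕ} {x : ExtAlg m} (hx : x ∈ ⋀[ℝ]^p (Vm m)) :
    numberOp m x = (p : ℝ) • x := by
  have hstdB : ∀ v : Vm m, ∑ i, ⟪stdB m i, v⟫ • stdB m i = v := by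
    simpa [stdB] using (EuclideanSpace.basisFun (Fin m) ℝ).sum_repr'
  simpa [numberOp, wedgeL, interL, LinearMap.sum_apply] using
    sum_ι_mul_contractLeft_of_mem_exteriorPower (stdB m)
      (fun i => (innerSL ℝ (stdB m i)).toLinearMap) hstdB hx

theorem cC_comp_cH (e : Vm m) :
    cC e ∘ₗ cH e = (2 : ℝ) • (wedgeL e ∘ₗ interL e) - ⟪e, e⟫ • LinearMap.id := by
  refine LinearMap.ext fun x => ?_
  have hwedge : ι ℝ e * (ι ℝ e * x) = 0 := by rw [← mul_assoc, ι_sq_zero, zero_mul]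
  have hinter : interL e (interL e x) = 0 := CliffordAlgebra.contractLeft_contractLeft _ _
  have hinter_wedge : interL e (ι ℝ e * x) = ⟪e, e⟫ • x - ι ℝ e * interL e x :=
    CliffordAlgebra.contractLeft_ι_mul _ _ _
  simp only [cC, cH, wedgeL, LinearMap.comp_apply, LinearMap.sub_apply, LinearMap.add_apply,
    LinearMap.smul_apply, map_add, LinearMap.mulLeft_apply, LinearMap.id_apply, hwedge, hinter,
    hinter_wedge]
  module

theorem Sop_apply (x : ExtAlg m) :
    Sop m x = (2 : ℝ) • numberOp m (σP m x) - (m : ℝ) • σP m x := by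
  have hnorm : ∀ i, ⟪stdB m i, stdB m i⟫ = (1 : ℝ) := fun i => by simp [stdB]
  have hterm : ∀ i, cC (stdB m i) (cH (stdB m i) (σP m x)) =
      (2 : ℝ) • wedgeL (stdB m i) (interL (stdB m i) (σP m x)) - σP m x := fun i => by
    have h := LinearMap.congr_fun (cC_comp_cH (stdB m i)) (σP m x)
    simpa only [LinearMap.comp_apply, LinearMap.sub_apply, LinearMap.smul_apply,
      LinearMap.id_apply, hnorm, one_smul] using h
  simp only [Sop, cT, numberOp, LinearMap.sum_apply, LinearMap.comp_apply, hterm,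
    Finset.sum_sub_distrib, Finset.smul_sum, Finset.sum_const, Finset.card_univ,
    Fintype.card_fin, Nat.cast_smul_eq_nsmul]

theorem Sop_apply_of_mem {p : ℕ} {x : ExtAlg m} (hx : x ∈ ⋀[ℝ]^p (Vm m)) :
    Sop m x = sopEigenvalue m p • x := by
  have hσ : σP m x = (-1 : ℝ) ^ p • x := involute_of_mem_exteriorPower hx
  rw [Sop_apply, hσ, map_smul, numberOp_apply_of_mem hx, sopEigenvalue]
  module

theorem neg_le_sopEigenvalue {p : ℕ} (hp : p ≤ m) : -(m : ℝ) ≤ sopEigenvalue m p := by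
  have hp' : (p : ℝ) ≤ m := by exact_mod_cast hp
  rcases Nat.even_or_odd p with hpe | hpo
  · rw [sopEigenvalue, hpe.neg_one_pow]; linarith [(p.cast_nonneg : (0 : ℝ) ≤ p)]
  · rw [sopEigenvalue, hpo.neg_one_pow]; linarith

theorem sopEigenvalue_eq_neg_iff (hm : Even m) {p : ℕ} : sopEigenvalue m p = -m ↔ p = 0 := by
  refine ⟨fun h => ?_, fun hp => by simp [sopEigenvalue, hp]⟩
  rcases Nat.even_or_odd p with hpe | hpo
  · rw [sopEigenvalue, hpe.neg_one_pow] at h; exact_mod_cast (by linarith : (p : ℝ) = 0)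
  · rw [sopEigenvalue, hpo.neg_one_pow] at h
    have hpm : p = m := by exact_mod_cast (by linarith : (p : ℝ) = m)
    exact absurd (hpm ▸ hpo) (Nat.not_odd_iff_even.mpr hm)

end Sop

theorem Sop_lowest_eigenvalue_general (m : ℕ) (hme : Even m) :
    Sop m (1 : ExtAlg m) = (-(m : ℝ)) • (1 : ExtAlg m) ∧
    (∀ (lam : ℝ) (x : ExtAlg m), x ≠ 0 → Sop m x = lam • x → -(m : ℝ) ≤ lam) ∧
    (∀ x : ExtAlg m, Sop m x = (-(m : ℝ)) • x ↔ ∃ c : ℝ, x = c • (1 : ExtAlg m)) := by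
  let 𝒜 : ℕ → Submodule ℝ (ExtAlg m) := fun p => ⋀[ℝ]^p (Vm m)
  have hS : ∀ p, ∀ y ∈ 𝒜 p, Sop m y = sopEigenvalue m p • y := fun p y hy => Sop_apply_of_mem hy
  have hdeg0 : 𝒜 0 = 1 := pow_zero _
  have hS1 : Sop m 1 = (-(m : ℝ)) • (1 : ExtAlg m) := by
    rw [hS 0 1 (hdeg0 ▸ Submodule.one_le.mp le_rfl), (sopEigenvalue_eq_neg_iff hme).mpr rfl]
  refine ⟨hS1, fun lam x hx hSx => ?_, fun x => ⟨fun hSx => ?_, ?_⟩⟩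
  · obtain ⟨p, hp⟩ := exists_decompose_ne_zero 𝒜 hx
    rw [← eq_of_apply_eq_smul_of_decompose_ne_zero 𝒜 hS hSx hp]
    refine neg_le_sopEigenvalue ?_
    simpa using le_finrank_of_mem_exteriorPower (SetLike.coe_mem _) hp
  · have hx0 : x ∈ 𝒜 0 := mem_of_forall_ne_decompose_eq_zero 𝒜 fun p hp => by
      by_contra hxp
      exact hp ((sopEigenvalue_eq_neg_iff hme).mp
        (eq_of_apply_eq_smul_of_decompose_ne_zero 𝒜 hS hSx hxp))
    obtain ⟨c, rfl⟩ := Submodule.mem_one.mp (hdeg0 ▸ hx0)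
    exact ⟨c, Algebra.algebraMap_eq_smul_one c⟩
  · rintro ⟨c, rfl⟩
    rw [map_smul, hS1, smul_comm]

/-- Proposition 5.12: for `m` even, the lowest eigenvalue of `S` on `Λ(V)` is `−m`,
with one-dimensional eigenspace spanned by `1 ∈ Λ^0(V)`. -/
theorem Sop_lowest_eigenvalue (m : ℕ) (hm : 0 < m) (hme : Even m) :
    Sop m (1 : ExtAlg m) = (-(m : ℝ)) • (1 : ExtAlg m) ∧
    (∀ (lam : ℝ) (x : ExtAlg m), x ≠ 0 → Sop m x = lam • x → -(m : ℝ) ≤ lam) ∧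
    (∀ x : ExtAlg m, Sop m x = (-(m : ℝ)) • x ↔ ∃ c : ℝ, x = c • (1 : ExtAlg m)) :=
  Sop_lowest_eigenvalue_general m hme
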